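/- arXiv:2604.21319 — 2 statements merged into one kernel-verified Lean document; each statement's English description precedes it below -/
import Mathlib

section
/- Define the bivariate Mittag-Leffler series E₂(x,y) = ∑_{m=0}^∞ ∑_{n=0}^∞ (γ₁)_{α₁m+β₁n} (γ₂)_{α₂m} x^m y^n / (Γ(δ₁+α₃m+β₂n) Γ(δ₂+α₄m) Γ(δ₃+β₃n)), where (γ)_s = Γ(γ+s)/Γ(γ). If Δ₁ := α₃+α₄-α₁-α₂ > 0 and Δ₂ := β₂+β₃-β₁ > 0, with all of α₁,α₂,α₃,α₄,β₁,β₂,β₃ > 0 except possibly α₂ = 0 is allowed, and γ₁,γ₂,δ₁,δ₂,δ₃ > 0, then the double series converges absolutely for all x, y ∈ ℂ. -/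
/-- Generalized Pochhammer symbol `(γ)_s = Γ(γ+s)/Γ(γ)`. -/
noncomputable def genPoch (γ s : ℝ) : ℝ := Real.Gamma (γ + s) / Real.Gamma γ

/-- The general term of the bivariate Mittag-Leffler double series. -/
noncomputable def E2term (γ₁ α₁ β₁ γ₂ α₂ δ₁ α₃ β₂ δ₂ α₄ δ₃ β₃ : ℝ)
    (x y : ℂ) (p : ℕ × ℕ) : ℂ :=
  ((genPoch γ₁ (α₁ * p.1 + β₁ * p.2) * genPoch γ₂ (α₂ * p.1) : ℝ) : ℂ) *
      x ^ p.1 * y ^ p.2 /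
    ((Real.Gamma (δ₁ + α₃ * p.1 + β₂ * p.2) * Real.Gamma (δ₂ + α₄ * p.1) *
        Real.Gamma (δ₃ + β₃ * p.2) : ℝ) : ℂ)

/-!
By log-convexity of `Γ`,
`Γ(γ₁ + α₁m + β₁n) ≤ Γ(γ₁ + 2α₁m)^{1/2} Γ(γ₁ + 2β₁n)^{1/2}` and
`Γ(δ₁ + α₃m) Γ(δ₁ + β₂n) ≤ Γ(δ₁) Γ(δ₁ + α₃m + β₂n)`, so the `(m, n)` term of the double series is
bounded by a constant times `F m * G n`, where `F` and `G` are the terms of two single series.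
Log-convexity also gives `(x - 1)^a ≤ Γ(x + a) / Γ(x) ≤ (x + a)^a`, so the consecutive ratios of `F`
are `O(m^{α₁ + α₂ - α₃ - α₄})` and those of `G` are `O(n^{β₁ - β₂ - β₃})`. Both exponents are
negative because `Δ₁, Δ₂ > 0`, and the ratio test applies.
-/

open Real Filter Topology

theorem ConvexOn.map_add_add_map_add_le {s : Set ℝ} {f : ℝ → ℝ} {c u v : ℝ}
    (hf : ConvexOn ℝ s f) (hc : c ∈ s) (hcuv : c + u + v ∈ s) (hu : 0 ≤ u) (hv : 0 ≤ v) :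
    f (c + u) + f (c + v) ≤ f c + f (c + u + v) := by
  rcases (add_nonneg hu hv).eq_or_lt with huv | huv
  · obtain ⟨rfl, rfl⟩ : u = 0 ∧ v = 0 := ⟨by linarith, by linarith⟩
    simp
  have interpolate (a b : ℝ) (ha : 0 ≤ a) (hb : 0 ≤ b) (hab : a + b = u + v) :
      f (c + b) ≤ a / (u + v) * f c + b / (u + v) * f (c + u + v) := by
    have h := hf.2 hc hcuv (div_nonneg ha huv.le) (div_nonneg hb huv.le)
      (by rw [← add_div, hab, div_self huv.ne'])
    have hpt : a / (u + v) * c + b / (u + v) * (c + u + v) = c + b := by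
      field_simp
      linear_combination c * hab
    simpa only [smul_eq_mul, hpt] using h
  have h₁ := interpolate v u hv hu (add_comm v u)
  have h₂ := interpolate u v hu hv rfl
  have hsum : f c + f (c + u + v) = (v / (u + v) * f c + u / (u + v) * f (c + u + v)) +
      (u / (u + v) * f c + v / (u + v) * f (c + u + v)) := by
    field_simp
    ring
  linarith

namespace Real

variable {c u v x a : ℝ}

theorem Gamma_add_mul_Gamma_add_le (hc : 0 < c) (hu : 0 ≤ u) (hv : 0 ≤ v) :
    Gamma (c + u) * Gamma (c + v) ≤ Gamma c * Gamma (c + u + v) := by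
  have h := convexOn_log_Gamma.map_add_add_map_add_le hc
    (show 0 < c + u + v by positivity) hu hv
  simp only [Function.comp_apply] at h
  rwa [← log_le_log_iff (by positivity) (by positivity), log_mul (by positivity) (by positivity),
    log_mul (by positivity) (by positivity)]

theorem Gamma_add_add_le_rpow_mul_rpow {γ s t : ℝ} (hs : 0 < γ + 2 * s) (ht : 0 < γ + 2 * t) :
    Gamma (γ + (s + t)) ≤ Gamma (γ + 2 * s) ^ (1 / 2 : ℝ) * Gamma (γ + 2 * t) ^ (1 / 2 : ℝ) := by
  convert Gamma_mul_add_mul_le_rpow_Gamma_mul_rpow_Gamma hs ht one_half_pos one_half_pos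
    (add_halves 1) using 2
  ring

theorem Gamma_add_le_mul_rpow (hx : 0 < x) (ha : 0 ≤ a) :
    Gamma (x + a) ≤ Gamma x * (x + a) ^ a := by
  rcases ha.eq_or_lt with rfl | ha
  · simp
  have hxa : 0 < x + a := by linarith
  -- the slope of `log ∘ Gamma` on `[x, x + a]` is at most its slope `log (x + a)`
  -- on `[x + a, x + a + 1]`
  have h := convexOn_log_Gamma.slope_mono_adjacent (y := x + a) hx
    (show 0 < x + a + 1 by linarith) (by linarith) (by linarith)
  simp only [Function.comp_apply, Gamma_add_one hxa.ne',
    log_mul hxa.ne' (Gamma_pos_of_pos hxa).ne', add_sub_cancel_left, div_one] at h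
  rw [← log_le_log_iff (Gamma_pos_of_pos hxa) (by positivity),
    log_mul (Gamma_pos_of_pos hx).ne' (by positivity), log_rpow hxa]
  rw [div_le_iff₀ ha] at h
  linarith

theorem Gamma_mul_rpow_le_Gamma_add (hx : 1 < x) (ha : 0 ≤ a) :
    Gamma x * (x - 1) ^ a ≤ Gamma (x + a) := by
  rcases ha.eq_or_lt with rfl | ha
  · simp
  have hx₀ : 0 < x - 1 := by linarith
  -- the slope `log (x - 1)` of `log ∘ Gamma` on `[x - 1, x]` is at most its slope on `[x, x + a]`
  have h := convexOn_log_Gamma.slope_mono_adjacent (y := x) hx₀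
    (show 0 < x + a by linarith) (by linarith) (by linarith)
  have hrec : Gamma x = (x - 1) * Gamma (x - 1) := by
    rw [← Gamma_add_one hx₀.ne', sub_add_cancel]
  simp only [Function.comp_apply, hrec, log_mul hx₀.ne' (Gamma_pos_of_pos hx₀).ne',
    sub_sub_cancel, add_sub_cancel_left, div_one] at h
  rw [← log_le_log_iff (by positivity) (Gamma_pos_of_pos (by linarith)),
    log_mul (by positivity) (by positivity), log_rpow hx₀, hrec,
    log_mul hx₀.ne' (Gamma_pos_of_pos hx₀).ne']
  rw [le_div_iff₀ ha] at h
  linarith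

end Real

section RatioBounds

def RatioBoundedAbove (u : ℕ → ℝ) (s : ℝ) : Prop :=
  (∀ m, 0 ≤ u m) ∧ ∃ C ≥ 0, ∀ᶠ m : ℕ in atTop, u (m + 1) ≤ C * (m : ℝ) ^ s * u m

def RatioBoundedBelow (u : ℕ → ℝ) (s : ℝ) : Prop :=
  (∀ m, 0 < u m) ∧ ∃ C > 0, ∀ᶠ m : ℕ in atTop, C * (m : ℝ) ^ s * u m ≤ u (m + 1)

variable {u v : ℕ → ℝ} {s t : ℝ}

theorem RatioBoundedAbove.summable (h : RatioBoundedAbove u s) (hs : s < 0) : Summable u := by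
  obtain ⟨hu, C, -, hC⟩ := h
  have hsmall : ∀ᶠ m : ℕ in atTop, C * (m : ℝ) ^ s ≤ 1 / 2 := by
    have h₀ : Tendsto (fun m : ℕ => C * (m : ℝ) ^ s) atTop (𝓝 0) := by
      simpa using ((tendsto_rpow_neg_atTop (neg_pos.2 hs)).comp
        tendsto_natCast_atTop_atTop).const_mul C
    exact (h₀.eventually_lt_const one_half_pos).mono fun _ => le_of_lt
  refine summable_of_ratio_norm_eventually_le one_half_lt_one ?_
  filter_upwards [hC, hsmall] with m hm hCm
  rw [norm_of_nonneg (hu _), norm_of_nonneg (hu _)]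
  exact hm.trans (mul_le_mul_of_nonneg_right hCm (hu m))

theorem RatioBoundedAbove.mul (hu : RatioBoundedAbove u s) (hv : RatioBoundedAbove v t) :
    RatioBoundedAbove (fun m => u m * v m) (s + t) := by
  obtain ⟨hu₀, C, hC₀, hC⟩ := hu
  obtain ⟨hv₀, D, hD₀, hD⟩ := hv
  refine ⟨fun m => mul_nonneg (hu₀ m) (hv₀ m), C * D, mul_nonneg hC₀ hD₀, ?_⟩
  filter_upwards [hC, hD, eventually_gt_atTop 0] with m hCm hDm hm
  have hm : (0 : ℝ) < m := Nat.cast_pos.2 hm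
  calc u (m + 1) * v (m + 1) ≤ (C * (m : ℝ) ^ s * u m) * (D * (m : ℝ) ^ t * v m) :=
        mul_le_mul hCm hDm (hv₀ _) ((hu₀ _).trans hCm)
    _ = C * D * (m : ℝ) ^ (s + t) * (u m * v m) := by rw [rpow_add hm]; ring

theorem RatioBoundedBelow.mul (hu : RatioBoundedBelow u s) (hv : RatioBoundedBelow v t) :
    RatioBoundedBelow (fun m => u m * v m) (s + t) := by
  obtain ⟨hu₀, C, hC₀, hC⟩ := hu
  obtain ⟨hv₀, D, hD₀, hD⟩ := hv
  refine ⟨fun m => mul_pos (hu₀ m) (hv₀ m), C * D, mul_pos hC₀ hD₀, ?_⟩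
  filter_upwards [hC, hD, eventually_gt_atTop 0] with m hCm hDm hm
  have hm : (0 : ℝ) < m := Nat.cast_pos.2 hm
  have := hu₀ m
  have := hv₀ m
  calc C * D * (m : ℝ) ^ (s + t) * (u m * v m)
      = (C * (m : ℝ) ^ s * u m) * (D * (m : ℝ) ^ t * v m) := by rw [rpow_add hm]; ring
    _ ≤ u (m + 1) * v (m + 1) := mul_le_mul hCm hDm (by positivity) (hu₀ _).le

theorem RatioBoundedAbove.rpow (hu : RatioBoundedAbove u s) {p : ℝ} (hp : 0 ≤ p) :
    RatioBoundedAbove (fun m => u m ^ p) (s * p) := by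
  obtain ⟨hu₀, C, hC₀, hC⟩ := hu
  refine ⟨fun m => rpow_nonneg (hu₀ m) p, C ^ p, rpow_nonneg hC₀ p, ?_⟩
  filter_upwards [hC] with m hm
  have := hu₀ m
  calc u (m + 1) ^ p ≤ (C * (m : ℝ) ^ s * u m) ^ p := rpow_le_rpow (hu₀ _) hm hp
    _ = C ^ p * (m : ℝ) ^ (s * p) * u m ^ p := by
      rw [mul_rpow (by positivity) (hu₀ m), mul_rpow hC₀ (by positivity),
        ← rpow_mul (Nat.cast_nonneg m)]

theorem RatioBoundedAbove.div (hu : RatioBoundedAbove u s) (hv : RatioBoundedBelow v t) :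
    RatioBoundedAbove (fun m => u m / v m) (s - t) := by
  obtain ⟨hu₀, C, hC₀, hC⟩ := hu
  obtain ⟨hv₀, D, hD₀, hD⟩ := hv
  refine ⟨fun m => div_nonneg (hu₀ m) (hv₀ m).le, C / D, div_nonneg hC₀ hD₀.le, ?_⟩
  filter_upwards [hC, hD, eventually_gt_atTop 0] with m hCm hDm hm
  have hm : (0 : ℝ) < m := Nat.cast_pos.2 hm
  have := hu₀ m
  have := hv₀ m
  calc u (m + 1) / v (m + 1) ≤ (C * (m : ℝ) ^ s * u m) / (D * (m : ℝ) ^ t * v m) :=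
        div_le_div₀ (by positivity) hCm (by positivity) hDm
    _ = C / D * (m : ℝ) ^ (s - t) * (u m / v m) := by
      rw [rpow_sub hm]
      field_simp

theorem ratioBoundedAbove_pow {r : ℝ} (hr : 0 ≤ r) : RatioBoundedAbove (fun m => r ^ m) 0 :=
  ⟨fun m => pow_nonneg hr m, r, hr, Eventually.of_forall fun m => by simp [pow_succ, mul_comm]⟩

theorem ratioBoundedAbove_Gamma_affine {c a : ℝ} (hc : 0 < c) (ha : 0 ≤ a) :
    RatioBoundedAbove (fun m : ℕ => Gamma (c + a * m)) a := by
  refine ⟨fun m => by positivity, (c + 2 * a) ^ a, by positivity, ?_⟩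
  filter_upwards [eventually_ge_atTop 1] with m hm
  have hm : (1 : ℝ) ≤ m := Nat.one_le_cast.2 hm
  have hcm : 0 < c + a * m := by positivity
  calc Gamma (c + a * (m + 1 : ℕ)) = Gamma ((c + a * m) + a) := by push_cast; ring_nf
    _ ≤ Gamma (c + a * m) * (c + a * m + a) ^ a := Gamma_add_le_mul_rpow hcm ha
    _ ≤ Gamma (c + a * m) * ((c + 2 * a) * m) ^ a := by
      gcongr
      nlinarith
    _ = (c + 2 * a) ^ a * (m : ℝ) ^ a * Gamma (c + a * m) := by
      rw [mul_rpow (by positivity) (by positivity)]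
      ring

theorem ratioBoundedBelow_Gamma_affine {c a : ℝ} (hc : 0 < c) (ha : 0 < a) :
    RatioBoundedBelow (fun m : ℕ => Gamma (c + a * m)) a := by
  refine ⟨fun m => by positivity, (a / 2) ^ a, by positivity, ?_⟩
  filter_upwards [tendsto_natCast_atTop_atTop.eventually_ge_atTop (2 / a)] with m hm
  have ham : 2 ≤ a * m := by rwa [div_le_iff₀' ha] at hm
  calc (a / 2) ^ a * (m : ℝ) ^ a * Gamma (c + a * m)
      = Gamma (c + a * m) * (a / 2 * m) ^ a := by
        rw [mul_rpow (by positivity) (by positivity)]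
        ring
    _ ≤ Gamma (c + a * m) * (c + a * m - 1) ^ a := by
      gcongr
      linarith
    _ ≤ Gamma ((c + a * m) + a) := Gamma_mul_rpow_le_Gamma_add (by linarith) ha.le
    _ = Gamma (c + a * (m + 1 : ℕ)) := by push_cast; ring_nf

end RatioBounds

theorem norm_E2term_le {γ₁ α₁ β₁ γ₂ α₂ δ₁ α₃ β₂ δ₂ α₄ δ₃ β₃ : ℝ}
    (hγ₁ : 0 < γ₁) (hγ₂ : 0 < γ₂) (hδ₁ : 0 < δ₁) (hδ₂ : 0 < δ₂) (hδ₃ : 0 < δ₃)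
    (hα₁ : 0 ≤ α₁) (hα₂ : 0 ≤ α₂) (hα₃ : 0 ≤ α₃) (hα₄ : 0 ≤ α₄)
    (hβ₁ : 0 ≤ β₁) (hβ₂ : 0 ≤ β₂) (hβ₃ : 0 ≤ β₃) (x y : ℂ) (m n : ℕ) :
    ‖E2term γ₁ α₁ β₁ γ₂ α₂ δ₁ α₃ β₂ δ₂ α₄ δ₃ β₃ x y (m, n)‖ ≤
      Gamma δ₁ / (Gamma γ₁ * Gamma γ₂) *
        (Gamma (γ₁ + 2 * α₁ * m) ^ (1 / 2 : ℝ) * Gamma (γ₂ + α₂ * m) * ‖x‖ ^ m /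
            (Gamma (δ₁ + α₃ * m) * Gamma (δ₂ + α₄ * m)) *
          (Gamma (γ₁ + 2 * β₁ * n) ^ (1 / 2 : ℝ) * ‖y‖ ^ n /
            (Gamma (δ₁ + β₂ * n) * Gamma (δ₃ + β₃ * n)))) := by
  have hnum : Gamma (γ₁ + (α₁ * m + β₁ * n)) ≤
      Gamma (γ₁ + 2 * (α₁ * m)) ^ (1 / 2 : ℝ) * Gamma (γ₁ + 2 * (β₁ * n)) ^ (1 / 2 : ℝ) :=
    Gamma_add_add_le_rpow_mul_rpow (by positivity) (by positivity)
  have hden : Gamma (δ₁ + α₃ * m) * Gamma (δ₁ + β₂ * n) / Gamma δ₁ ≤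
      Gamma (δ₁ + α₃ * m + β₂ * n) := by
    rw [div_le_iff₀' (by positivity)]
    exact Gamma_add_mul_Gamma_add_le hδ₁ (by positivity) (by positivity)
  set K := Gamma (γ₂ + α₂ * m) * (‖x‖ ^ m * ‖y‖ ^ n) /
    (Gamma γ₁ * Gamma γ₂ * (Gamma (δ₂ + α₄ * m) * Gamma (δ₃ + β₃ * n)))
  calc ‖E2term γ₁ α₁ β₁ γ₂ α₂ δ₁ α₃ β₂ δ₂ α₄ δ₃ β₃ x y (m, n)‖
      = Gamma (γ₁ + (α₁ * m + β₁ * n)) * K / Gamma (δ₁ + α₃ * m + β₂ * n) := by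
        simp (disch := positivity) only [E2term, genPoch, norm_div, norm_mul, norm_pow,
          Complex.norm_real, norm_of_nonneg, K]
        field_simp
    _ ≤ Gamma (γ₁ + 2 * (α₁ * m)) ^ (1 / 2 : ℝ) * Gamma (γ₁ + 2 * (β₁ * n)) ^ (1 / 2 : ℝ) * K /
          (Gamma (δ₁ + α₃ * m) * Gamma (δ₁ + β₂ * n) / Gamma δ₁) := by
        gcongr
    _ = _ := by
        simp only [K]
        field_simp

/-- Lemma 3: under `Δ₁ = α₃+α₄-α₁-α₂ > 0` and `Δ₂ = β₂+β₃-β₁ > 0`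
the bivariate Mittag-Leffler double series converges absolutely for all `x y : ℂ`. -/
theorem E2_converges_absolutely (γ₁ α₁ β₁ γ₂ α₂ δ₁ α₃ β₂ δ₂ α₄ δ₃ β₃ : ℝ)
    (hγ₁ : 0 < γ₁) (hγ₂ : 0 < γ₂) (hδ₁ : 0 < δ₁) (hδ₂ : 0 < δ₂) (hδ₃ : 0 < δ₃)
    (hα₁ : 0 < α₁) (hα₂ : 0 ≤ α₂) (hα₃ : 0 < α₃) (hα₄ : 0 < α₄)
    (hβ₁ : 0 < β₁) (hβ₂ : 0 < β₂) (hβ₃ : 0 < β₃)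
    (hΔ₁ : 0 < α₃ + α₄ - α₁ - α₂) (hΔ₂ : 0 < β₂ + β₃ - β₁) :
    ∀ x y : ℂ,
      Summable (fun p : ℕ × ℕ =>
        ‖E2term γ₁ α₁ β₁ γ₂ α₂ δ₁ α₃ β₂ δ₂ α₄ δ₃ β₃ x y p‖) := by
  intro x y
  have hF : RatioBoundedAbove (fun m : ℕ => Gamma (γ₁ + 2 * α₁ * m) ^ (1 / 2 : ℝ) *
      Gamma (γ₂ + α₂ * m) * ‖x‖ ^ m / (Gamma (δ₁ + α₃ * m) * Gamma (δ₂ + α₄ * m)))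
      (2 * α₁ * (1 / 2) + α₂ + 0 - (α₃ + α₄)) :=
    ((((ratioBoundedAbove_Gamma_affine hγ₁ (by positivity)).rpow one_half_pos.le).mul
      (ratioBoundedAbove_Gamma_affine hγ₂ hα₂)).mul (ratioBoundedAbove_pow (norm_nonneg x))).div
      ((ratioBoundedBelow_Gamma_affine hδ₁ hα₃).mul (ratioBoundedBelow_Gamma_affine hδ₂ hα₄))
  have hG : RatioBoundedAbove (fun n : ℕ => Gamma (γ₁ + 2 * β₁ * n) ^ (1 / 2 : ℝ) *
      ‖y‖ ^ n / (Gamma (δ₁ + β₂ * n) * Gamma (δ₃ + β₃ * n)))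
      (2 * β₁ * (1 / 2) + 0 - (β₂ + β₃)) :=
    (((ratioBoundedAbove_Gamma_affine hγ₁ (by positivity)).rpow one_half_pos.le).mul
      (ratioBoundedAbove_pow (norm_nonneg y))).div
      ((ratioBoundedBelow_Gamma_affine hδ₁ hβ₂).mul (ratioBoundedBelow_Gamma_affine hδ₃ hβ₃))
  refine .of_nonneg_of_le (fun _ => norm_nonneg _) (fun p => ?_)
    (((hF.summable (by linarith)).mul_of_nonneg (hG.summable (by linarith)) hF.1 hG.1).mul_left
      (Gamma δ₁ / (Gamma γ₁ * Gamma γ₂)))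
  exact norm_E2term_le hγ₁ hγ₂ hδ₁ hδ₂ hδ₃ hα₁.le hα₂ hα₃.le hα₄.le hβ₁.le hβ₂.le hβ₃.le x y p.1 p.2
end

section
/- Let a > 1/2 and let g : [0,1] → ℝ be Hölder continuous with exponent a and Hölder constant ‖g‖, satisfying g(0) = g(1) = 0. Let g_k = 2∫_0^1 g(x) sin(πkx) dx be its sine Fourier coefficients. Then for every σ ∈ [0, a - 1/2) there exists a constant C > 0, independent of g, such that ∑_{k=1}^∞ k^σ |g_k| ≤ C‖g‖. -/
open Real MeasureTheory Set Filter Topology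

/-!
Extend `g` to the odd `2`-periodic function `G`, which is Hölder with constant `2‖g‖` on all of
`ℝ`. For a shift `h`, the cosine coefficients of `x ↦ G (x + h) - G (x - h)` on `[-1, 1]` are
`2 sin (π k h) g_k`, so Bessel's inequality and the sup bound `2‖g‖ |2h|^a` give
`∑ sin² (π k h) g_k² ≤ 2‖g‖² |2h|^(2a)`. With `h = 1/(4N)` we have
`sin² (π k h) ≥ 1/2` on the dyadic block `N ≤ k < 2N`, and Cauchy–Schwarz turns this into
`∑_{N ≤ k < 2N} k^σ |g_k| ≲ ‖g‖ N^(σ + 1/2 - a)`, which sums over `N = 2^j` because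
`σ < a - 1/2`.
-/

/-- On each cell `[n, n + 1]` this is `± g` composed with an affine bijection onto `[0, 1]`;
when `g 0 = g 1 = 0` it is the odd `2`-periodic extension of `g` restricted to `[0, 1]`. -/
noncomputable def oddPeriodicExt (g : ℝ → ℝ) (x : ℝ) : ℝ :=
  if Even ⌊x⌋ then g (Int.fract x) else -g (1 - Int.fract x)

noncomputable def sineCoeff (g : ℝ → ℝ) (k : ℕ) : ℝ :=
  2 * ∫ x in (0:ℝ)..1, g x * sin (π * k * x)

section OddPeriodicExt

variable {g : ℝ → ℝ}

lemma oddPeriodicExt_periodic : Function.Periodic (oddPeriodicExt g) 2 := by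
  intro x
  have h2 : x + 2 = x + ((2 : ℤ) : ℝ) := by norm_num
  simp [oddPeriodicExt, h2, Int.floor_add_intCast, Int.fract_add_intCast]

lemma oddPeriodicExt_eq_of_mem_Icc (hg0 : g 0 = 0) (hg1 : g 1 = 0) {n : ℤ} {x : ℝ}
    (hx : x ∈ Icc (n : ℝ) (n + 1)) :
    oddPeriodicExt g x = if Even n then g (x - n) else -g (n + 1 - x) := by
  rcases hx.2.lt_or_eq with hlt | rfl
  · have hfl : ⌊x⌋ = n := Int.floor_eq_iff.2 ⟨hx.1, hlt⟩
    simp only [oddPeriodicExt, Int.fract, hfl, sub_sub_eq_add_sub, add_comm (1 : ℝ)]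
  · have hfl : ⌊(n : ℝ) + 1⌋ = n + 1 := by exact_mod_cast Int.floor_intCast (n + 1)
    by_cases hn : Even n <;> simp [oddPeriodicExt, hfl, hn, hg0, hg1]

lemma oddPeriodicExt_intCast (hg0 : g 0 = 0) (hg1 : g 1 = 0) (n : ℤ) :
    oddPeriodicExt g n = 0 := by
  rw [oddPeriodicExt_eq_of_mem_Icc hg0 hg1 ⟨le_rfl, by linarith⟩]
  split_ifs <;> simp [hg0, hg1]

lemma oddPeriodicExt_of_mem_Icc (hg0 : g 0 = 0) (hg1 : g 1 = 0) {x : ℝ} (hx : x ∈ Icc 0 1) :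
    oddPeriodicExt g x = g x := by
  simpa using oddPeriodicExt_eq_of_mem_Icc hg0 hg1 (n := 0) (by simpa using hx)

lemma oddPeriodicExt_neg_of_mem_Icc (hg0 : g 0 = 0) (hg1 : g 1 = 0) {x : ℝ} (hx : x ∈ Icc 0 1) :
    oddPeriodicExt g (-x) = -g x := by
  have hx' : -x ∈ Icc ((-1 : ℤ) : ℝ) ((-1 : ℤ) + 1) := by
    push_cast; constructor <;> linarith [hx.1, hx.2]
  simpa using oddPeriodicExt_eq_of_mem_Icc hg0 hg1 hx'

variable {H a : ℝ}

lemma abs_oddPeriodicExt_sub_le_of_mem_Icc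
    (hH : ∀ x₁ ∈ Icc (0:ℝ) 1, ∀ x₂ ∈ Icc (0:ℝ) 1,
      |g x₁ - g x₂| ≤ H * |x₁ - x₂| ^ a)
    (hg0 : g 0 = 0) (hg1 : g 1 = 0) {n : ℤ} {x y : ℝ}
    (hx : x ∈ Icc (n : ℝ) (n + 1)) (hy : y ∈ Icc (n : ℝ) (n + 1)) :
    |oddPeriodicExt g x - oddPeriodicExt g y| ≤ H * |x - y| ^ a := by
  rw [oddPeriodicExt_eq_of_mem_Icc hg0 hg1 hx, oddPeriodicExt_eq_of_mem_Icc hg0 hg1 hy]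
  have mem : ∀ z ∈ Icc (n : ℝ) (n + 1), z - n ∈ Icc (0 : ℝ) 1 ∧ n + 1 - z ∈ Icc (0 : ℝ) 1 :=
    fun z hz => ⟨⟨by linarith [hz.1], by linarith [hz.2]⟩,
      ⟨by linarith [hz.2], by linarith [hz.1]⟩⟩
  split_ifs
  · simpa using hH _ (mem x hx).1 _ (mem y hy).1
  · rw [neg_sub_neg]
    simpa using hH _ (mem y hy).2 _ (mem x hx).2

lemma abs_oddPeriodicExt_sub_le
    (hH : ∀ x₁ ∈ Icc (0:ℝ) 1, ∀ x₂ ∈ Icc (0:ℝ) 1,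
      |g x₁ - g x₂| ≤ H * |x₁ - x₂| ^ a)
    (ha : 0 ≤ a) (hg0 : g 0 = 0) (hg1 : g 1 = 0) (x y : ℝ) :
    |oddPeriodicExt g x - oddPeriodicExt g y| ≤ 2 * H * |x - y| ^ a := by
  wlog hxy : x ≤ y generalizing x y
  · rw [abs_sub_comm, abs_sub_comm x]
    exact this y x (le_of_not_ge hxy)
  have hH0 : 0 ≤ H := by simpa [hg0, hg1] using hH 0 (by simp) 1 (by simp)
  have cell : ∀ z : ℝ, z ∈ Icc (⌊z⌋ : ℝ) (⌊z⌋ + 1) :=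
    fun z => ⟨Int.floor_le z, (Int.lt_floor_add_one z).le⟩
  have mono : ∀ z w : ℝ, |z| ≤ |w| → H * |z| ^ a ≤ H * |w| ^ a :=
    fun z w h => mul_le_mul_of_nonneg_left (rpow_le_rpow (abs_nonneg z) h ha) hH0
  by_cases hy : y ≤ ⌊x⌋ + 1
  · have hcell := abs_oddPeriodicExt_sub_le_of_mem_Icc hH hg0 hg1 (cell x)
      ⟨(cell x).1.trans hxy, hy⟩
    nlinarith [rpow_nonneg (abs_nonneg (x - y)) a]
  -- otherwise pass through the integers `⌊x⌋ + 1 ≤ ⌊y⌋`, where the extension vanishes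
  set n : ℤ := ⌊x⌋ + 1
  have hxn : x ≤ n := by push_cast [n]; exact (cell x).2
  have hny : (n : ℝ) ≤ ⌊y⌋ := by exact_mod_cast Int.le_floor.2 (by push_cast [n]; linarith)
  have hyy : (⌊y⌋ : ℝ) ≤ y := Int.floor_le y
  calc |oddPeriodicExt g x - oddPeriodicExt g y|
      ≤ |oddPeriodicExt g x - oddPeriodicExt g n|
        + |oddPeriodicExt g ⌊y⌋ - oddPeriodicExt g y| := by
        simp only [oddPeriodicExt_intCast hg0 hg1, sub_zero, zero_sub, abs_neg]
        exact abs_sub _ _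
    _ ≤ H * |x - n| ^ a + H * |(⌊y⌋ : ℝ) - y| ^ a := by
        gcongr
        · exact abs_oddPeriodicExt_sub_le_of_mem_Icc hH hg0 hg1 (cell x) (by push_cast [n]; simp)
        · exact abs_oddPeriodicExt_sub_le_of_mem_Icc hH hg0 hg1 (by simp) (cell y)
    _ ≤ H * |x - y| ^ a + H * |x - y| ^ a := by
        refine add_le_add (mono _ _ ?_) (mono _ _ ?_) <;>
          rw [abs_of_nonpos (by linarith), abs_of_nonpos (by linarith)] <;> linarith
    _ = 2 * H * |x - y| ^ a := by ring

end OddPeriodicExt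

lemma continuous_of_abs_sub_le_mul_rpow {f : ℝ → ℝ} {K a : ℝ} (ha : 0 < a)
    (hf : ∀ x y, |f x - f y| ≤ K * |x - y| ^ a) : Continuous f := by
  refine continuous_iff_continuousAt.2 fun x => ?_
  have hlim : Tendsto (fun y => K * |y - x| ^ a) (𝓝 x) (𝓝 0) := by
    have hcont : Continuous fun y => K * |y - x| ^ a := by
      fun_prop (disch := exact ha.le)
    simpa [zero_rpow ha.ne'] using hcont.tendsto x
  exact tendsto_iff_norm_sub_tendsto_zero.2
    (squeeze_zero (fun _ => norm_nonneg _) (fun y => hf y x) hlim)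

lemma integral_comp_add_mul_cos {G : ℝ → ℝ} (hG : Continuous G) (hper : Function.Periodic G 2)
    (k : ℤ) (t : ℝ) :
    ∫ x in (-1:ℝ)..1, G (x + t) * cos (π * k * x)
      = cos (π * k * t) * (∫ x in (-1:ℝ)..1, G x * cos (π * k * x))
        + sin (π * k * t) * ∫ x in (-1:ℝ)..1, G x * sin (π * k * x) := by
  have hper' : Function.Periodic (fun y => G y * cos (π * k * (y - t))) 2 := fun y => by
    simp only
    rw [hper y, show π * k * (y + 2 - t) = π * k * (y - t) + k * (2 * π) by ring,
      cos_add_int_mul_two_pi]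
  calc ∫ x in (-1:ℝ)..1, G (x + t) * cos (π * k * x)
      = ∫ y in (-1 + t)..(-1 + t) + 2, G y * cos (π * k * (y - t)) := by
        have := intervalIntegral.integral_comp_add_right (a := -1) (b := 1)
          (fun y => G y * cos (π * k * (y - t))) t
        simp only [add_sub_cancel_right] at this
        rw [this, show (1:ℝ) + t = -1 + t + 2 by ring]
    _ = ∫ y in (-1:ℝ)..1, G y * cos (π * k * (y - t)) := by
        rw [hper'.intervalIntegral_add_eq _ (-1)]
        norm_num
    _ = ∫ y in (-1:ℝ)..1, (cos (π * k * t) * (G y * cos (π * k * y))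
          + sin (π * k * t) * (G y * sin (π * k * y))) := by
        congr 1; ext y
        rw [mul_sub, cos_sub]; ring
    _ = _ := by
        rw [intervalIntegral.integral_add, intervalIntegral.integral_const_mul,
          intervalIntegral.integral_const_mul] <;>
        exact (by fun_prop : Continuous _).intervalIntegrable _ _

lemma integral_sub_comp_sub_mul_cos {G : ℝ → ℝ} (hG : Continuous G)
    (hper : Function.Periodic G 2) (k : ℤ) (h : ℝ) :
    ∫ x in (-1:ℝ)..1, (G (x + h) - G (x - h)) * cos (π * k * x)
      = 2 * sin (π * k * h) * ∫ x in (-1:ℝ)..1, G x * sin (π * k * x) := by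
  have hshift := integral_comp_add_mul_cos hG hper k (-h)
  simp only [← sub_eq_add_neg, mul_neg, cos_neg, sin_neg] at hshift
  simp only [sub_mul]
  rw [intervalIntegral.integral_sub, integral_comp_add_mul_cos hG hper, hshift]
  · ring
  all_goals exact (by fun_prop : Continuous _).intervalIntegrable _ _

lemma integral_oddPeriodicExt_mul_sin {g : ℝ → ℝ} (hg0 : g 0 = 0) (hg1 : g 1 = 0)
    (hG : Continuous (oddPeriodicExt g)) (k : ℕ) :
    ∫ x in (-1:ℝ)..1, oddPeriodicExt g x * sin (π * k * x) = sineCoeff g k := by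
  have hint : ∀ b c : ℝ,
      IntervalIntegrable (fun x => oddPeriodicExt g x * sin (π * k * x)) volume b c :=
    fun b c => (by fun_prop : Continuous _).intervalIntegrable _ _
  have hright : ∫ x in (0:ℝ)..1, oddPeriodicExt g x * sin (π * k * x)
      = ∫ x in (0:ℝ)..1, g x * sin (π * k * x) :=
    intervalIntegral.integral_congr fun x hx => by
      rw [uIcc_of_le zero_le_one] at hx
      simp only [oddPeriodicExt_of_mem_Icc hg0 hg1 hx]
  have hleft : ∫ x in (-1:ℝ)..0, oddPeriodicExt g x * sin (π * k * x)
      = ∫ x in (0:ℝ)..1, g x * sin (π * k * x) := by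
    have := intervalIntegral.integral_comp_neg (a := 0) (b := 1)
      (fun x => oddPeriodicExt g x * sin (π * k * x))
    rw [neg_zero] at this
    rw [← this]
    refine intervalIntegral.integral_congr fun x hx => ?_
    rw [uIcc_of_le zero_le_one] at hx
    simp only [oddPeriodicExt_neg_of_mem_Icc hg0 hg1 hx, mul_neg, sin_neg, neg_mul, neg_neg]
  rw [← intervalIntegral.integral_add_adjacent_intervals (hint _ 0) (hint 0 _), hleft, hright,
    sineCoeff, two_mul]

lemma integral_cos_int_mul (m : ℤ) :
    ∫ x in (-1:ℝ)..1, cos (π * m * x) = if m = 0 then 2 else 0 := by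
  split_ifs with hm
  · norm_num [hm]
  · have hc : π * m ≠ 0 := mul_ne_zero pi_ne_zero (by exact_mod_cast hm)
    rw [intervalIntegral.integral_comp_mul_left (fun x => cos x) hc, integral_cos,
      mul_one, mul_neg_one, sin_neg, mul_comm, sin_int_mul_pi]
    simp

lemma integral_cos_mul_cos {j k : ℕ} (hk : k ≠ 0) :
    ∫ x in (-1:ℝ)..1, cos (π * j * x) * cos (π * k * x) = if j = k then 1 else 0 := by
  have hprod : ∀ x, cos (π * j * x) * cos (π * k * x)
      = (cos (π * ((j - k : ℤ) : ℝ) * x) + cos (π * ((j + k : ℤ) : ℝ) * x)) / 2 := by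
    intro x
    have := two_mul_cos_mul_cos (π * j * x) (π * k * x)
    push_cast
    rw [show π * (j - k) * x = π * j * x - π * k * x by ring,
      show π * (j + k) * x = π * j * x + π * k * x by ring]
    linarith
  simp_rw [hprod]
  rw [intervalIntegral.integral_div, intervalIntegral.integral_add, integral_cos_int_mul,
    integral_cos_int_mul]
  · have : (j : ℤ) + k ≠ 0 := by omega
    by_cases hjk : j = k <;> simp [hjk, hk, this, sub_eq_zero]
  all_goals exact (by fun_prop : Continuous _).intervalIntegrable _ _

lemma sum_sq_integral_mul_le_integral_sq {α ι : Type*} [MeasurableSpace α] [DecidableEq ι]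
    {μ : Measure α} {D : α → ℝ} {e : ι → α → ℝ} (s : Finset ι)
    (hD : Integrable (fun x => D x ^ 2) μ)
    (hDe : ∀ k ∈ s, Integrable (fun x => D x * e k x) μ)
    (hee : ∀ j ∈ s, ∀ k ∈ s, Integrable (fun x => e j x * e k x) μ)
    (horth : ∀ j ∈ s, ∀ k ∈ s, ∫ x, e j x * e k x ∂μ = if j = k then 1 else 0) :
    ∑ k ∈ s, (∫ x, D x * e k x ∂μ) ^ 2 ≤ ∫ x, D x ^ 2 ∂μ := by
  set c : ι → ℝ := fun k => ∫ x, D x * e k x ∂μ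
  set S : α → ℝ := fun x => ∑ k ∈ s, c k * e k x
  have hDS_eq : (fun x => D x * S x) = fun x => ∑ k ∈ s, c k * (D x * e k x) := by
    ext x; simp only [S, Finset.mul_sum, mul_left_comm]
  have hSS_eq :
      (fun x => S x * S x) = fun x => ∑ j ∈ s, c j * ∑ k ∈ s, c k * (e j x * e k x) := by
    ext x
    simp only [S, Finset.sum_mul, Finset.mul_sum]
    exact Finset.sum_congr rfl fun j _ => Finset.sum_congr rfl fun k _ => by ring
  have hee' : ∀ j ∈ s, Integrable (fun x => ∑ k ∈ s, c k * (e j x * e k x)) μ :=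
    fun j hj => integrable_finsetSum _ fun k hk => (hee j hj k hk).const_mul _
  have hDS : ∫ x, D x * S x ∂μ = ∑ k ∈ s, c k ^ 2 := by
    rw [hDS_eq, integral_finsetSum _ fun k hk => (hDe k hk).const_mul _]
    simp only [integral_const_mul, sq, c]
  have hSS : ∫ x, S x * S x ∂μ = ∑ k ∈ s, c k ^ 2 := by
    rw [hSS_eq, integral_finsetSum _ fun j hj => (hee' j hj).const_mul _]
    refine Finset.sum_congr rfl fun j hj => ?_
    rw [integral_const_mul, integral_finsetSum _ fun k hk => (hee j hj k hk).const_mul _]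
    simp only [integral_const_mul]
    rw [Finset.sum_congr rfl fun k hk => by rw [horth j hj k hk]]
    simp [hj, sq]
  have hDSi : Integrable (fun x => D x * S x) μ := by
    rw [hDS_eq]; exact integrable_finsetSum _ fun k hk => (hDe k hk).const_mul _
  have hSSi : Integrable (fun x => S x * S x) μ := by
    rw [hSS_eq]; exact integrable_finsetSum _ fun j hj => (hee' j hj).const_mul _
  calc ∑ k ∈ s, c k ^ 2 = ∫ x, (2 * (D x * S x) - S x * S x) ∂μ := by
        rw [integral_sub (hDSi.const_mul 2) hSSi, integral_const_mul, hDS, hSS]; ring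
    _ ≤ ∫ x, D x ^ 2 ∂μ :=
        integral_mono ((hDSi.const_mul 2).sub hSSi) hD fun x => by
          nlinarith [sq_nonneg (D x - S x)]

lemma half_le_sin_sq {x : ℝ} (h₁ : π / 4 ≤ x) (h₂ : x ≤ 3 * π / 4) :
    1 / 2 ≤ sin x ^ 2 := by
  have := cos_nonpos_of_pi_div_two_le_of_le (x := 2 * x) (by linarith) (by linarith)
  rw [sin_sq_eq_half_sub]
  linarith

lemma sum_sq_sineCoeff_le {g : ℝ → ℝ} {H a : ℝ}
    (hH : ∀ x₁ ∈ Icc (0:ℝ) 1, ∀ x₂ ∈ Icc (0:ℝ) 1,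
      |g x₁ - g x₂| ≤ H * |x₁ - x₂| ^ a)
    (ha : 0 < a) (hg0 : g 0 = 0) (hg1 : g 1 = 0) (h : ℝ) (s : Finset ℕ)
    (hs : ∀ k ∈ s, 1 / 2 ≤ sin (π * k * h) ^ 2) :
    ∑ k ∈ s, sineCoeff g k ^ 2 ≤ (2 * H * |2 * h| ^ a) ^ 2 := by
  set G := oddPeriodicExt g
  set M := 2 * H * |2 * h| ^ a
  have hG : Continuous G :=
    continuous_of_abs_sub_le_mul_rpow ha (abs_oddPeriodicExt_sub_le hH ha.le hg0 hg1)
  have hD : ∀ x, |G (x + h) - G (x - h)| ≤ M := fun x => by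
    simpa [M, show x + h - (x - h) = 2 * h by ring] using
      abs_oddPeriodicExt_sub_le hH ha.le hg0 hg1 (x + h) (x - h)
  have hcoeff : ∀ k : ℕ, ∫ x in (-1:ℝ)..1, (G (x + h) - G (x - h)) * cos (π * k * x)
      = 2 * sin (π * k * h) * sineCoeff g k := fun k => by
    simpa [G, integral_oddPeriodicExt_mul_sin hg0 hg1 hG] using
      integral_sub_comp_sub_mul_cos hG oddPeriodicExt_periodic k h
  have hk0 : ∀ k ∈ s, k ≠ 0 := fun k hk hk0 => by
    have := hs k hk
    simp only [hk0, CharP.cast_eq_zero, mul_zero, zero_mul, sin_zero] at this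
    norm_num at this
  have hbessel : ∑ k ∈ s, (∫ x in (-1:ℝ)..1, (G (x + h) - G (x - h)) * cos (π * k * x)) ^ 2
      ≤ ∫ x in (-1:ℝ)..1, (G (x + h) - G (x - h)) ^ 2 := by
    simp only [intervalIntegral.integral_of_le (show (-1:ℝ) ≤ 1 by norm_num)]
    refine sum_sq_integral_mul_le_integral_sq (e := fun (k : ℕ) x => cos (π * k * x)) s ?_
      (fun _ _ => ?_) (fun _ _ _ _ => ?_) fun j _ k hk => ?_
    any_goals exact (by fun_prop : Continuous _).integrableOn_Ioc
    rw [← intervalIntegral.integral_of_le (by norm_num)]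
    exact integral_cos_mul_cos (hk0 k hk)
  have hD2 : ∫ x in (-1:ℝ)..1, (G (x + h) - G (x - h)) ^ 2 ≤ 2 * M ^ 2 := by
    calc ∫ x in (-1:ℝ)..1, (G (x + h) - G (x - h)) ^ 2 ≤ ∫ _ in (-1:ℝ)..1, M ^ 2 :=
          intervalIntegral.integral_mono_on (by norm_num)
            ((by fun_prop : Continuous _).intervalIntegrable _ _) intervalIntegrable_const
            fun x _ => by simpa only [sq_abs] using pow_le_pow_left₀ (abs_nonneg _) (hD x) 2
      _ = 2 * M ^ 2 := by norm_num
  calc ∑ k ∈ s, sineCoeff g k ^ 2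
      ≤ ∑ k ∈ s, (2 * sin (π * k * h) * sineCoeff g k) ^ 2 / 2 :=
        Finset.sum_le_sum fun k hk => by
          nlinarith [mul_nonneg (sq_nonneg (sineCoeff g k)) (sub_nonneg.2 (hs k hk))]
    _ = (∑ k ∈ s, (∫ x in (-1:ℝ)..1, (G (x + h) - G (x - h)) * cos (π * k * x)) ^ 2) / 2 := by
        simp only [hcoeff, Finset.sum_div]
    _ ≤ M ^ 2 := by linarith

lemma sum_Ico_rpow_mul_abs_sineCoeff_le {g : ℝ → ℝ} {H a σ : ℝ}
    (hH : ∀ x₁ ∈ Icc (0:ℝ) 1, ∀ x₂ ∈ Icc (0:ℝ) 1,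
      |g x₁ - g x₂| ≤ H * |x₁ - x₂| ^ a)
    (ha : 0 < a) (hg0 : g 0 = 0) (hg1 : g 1 = 0) (hσ : 0 ≤ σ) {N : ℕ} (hN : 0 < N) :
    ∑ k ∈ Finset.Ico N (2 * N), (k : ℝ) ^ σ * |sineCoeff g k|
      ≤ 2 ^ (σ + 1 - a) * H * (N : ℝ) ^ (σ + 1 / 2 - a) := by
  have hN' : (0 : ℝ) < N := by exact_mod_cast hN
  have hH0 : 0 ≤ H := by simpa [hg0, hg1] using hH 0 (by simp) 1 (by simp)
  have hsin : ∀ k ∈ Finset.Ico N (2 * N), 1 / 2 ≤ sin (π * k * (4 * N : ℝ)⁻¹) ^ 2 := by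
    intro k hk
    obtain ⟨hk₁, hk₂⟩ := Finset.mem_Ico.1 hk
    have hk₁' : (N : ℝ) ≤ k := by exact_mod_cast hk₁
    have hk₂' : (k : ℝ) ≤ 2 * N := by exact_mod_cast hk₂.le
    apply half_le_sin_sq
    · rw [le_mul_inv_iff₀ (by positivity)]; nlinarith [pi_pos]
    · rw [mul_inv_le_iff₀ (by positivity)]; nlinarith [pi_pos]
  have hl2 := sum_sq_sineCoeff_le hH ha hg0 hg1 _ _ hsin
  have hshift : |2 * (4 * N : ℝ)⁻¹| ^ a = 2 ^ (-a) * (N : ℝ) ^ (-a) := by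
    rw [abs_of_pos (by positivity),
      show 2 * (4 * N : ℝ)⁻¹ = (2 * (N : ℝ))⁻¹ by field_simp; ring,
      inv_rpow (by positivity), ← rpow_neg (by positivity), mul_rpow (by norm_num) hN'.le]
  have hweights :
      ∑ k ∈ Finset.Ico N (2 * N), ((k : ℝ) ^ σ) ^ 2 ≤ N * (2 ^ σ * (N : ℝ) ^ σ) ^ 2 := by
    calc ∑ k ∈ Finset.Ico N (2 * N), ((k : ℝ) ^ σ) ^ 2
        ≤ ∑ k ∈ Finset.Ico N (2 * N), (2 ^ σ * (N : ℝ) ^ σ) ^ 2 :=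
          Finset.sum_le_sum fun k hk => by
            rw [← mul_rpow (by norm_num) hN'.le]
            gcongr
            exact_mod_cast (Finset.mem_Ico.1 hk).2.le
      _ = N * (2 ^ σ * (N : ℝ) ^ σ) ^ 2 := by simp [two_mul]
  calc ∑ k ∈ Finset.Ico N (2 * N), (k : ℝ) ^ σ * |sineCoeff g k|
      ≤ √(∑ k ∈ Finset.Ico N (2 * N), ((k : ℝ) ^ σ) ^ 2)
          * √(∑ k ∈ Finset.Ico N (2 * N), |sineCoeff g k| ^ 2) :=
        sum_mul_le_sqrt_mul_sqrt _ _ _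
    _ ≤ √(N * (2 ^ σ * (N : ℝ) ^ σ) ^ 2)
          * √((2 * H * |2 * (4 * N : ℝ)⁻¹| ^ a) ^ 2) := by
        simp only [sq_abs]
        gcongr
    _ = 2 ^ (σ + 1 - a) * H * (N : ℝ) ^ (σ + 1 / 2 - a) := by
        rw [sqrt_mul hN'.le, sqrt_sq (by positivity), sqrt_sq (by positivity), hshift,
          sqrt_eq_rpow, sub_eq_add_neg, sub_eq_add_neg, rpow_add two_pos, rpow_add two_pos,
          rpow_add hN', rpow_add hN', rpow_one]
        ring

lemma sum_Ico_one_two_pow (f : ℕ → ℝ) (J : ℕ) :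
    ∑ k ∈ Finset.Ico 1 (2 ^ J), f k
      = ∑ j ∈ Finset.range J, ∑ k ∈ Finset.Ico (2 ^ j) (2 * 2 ^ j), f k := by
  induction J with
  | zero => simp
  | succ J ih =>
    rw [Finset.sum_range_succ, ← ih, pow_succ', Finset.sum_Ico_consecutive _ Nat.one_le_two_pow
      (by omega)]

lemma summable_and_tsum_le_of_sum_Ico_two_pow_le {f : ℕ → ℝ} (hf : ∀ k, 0 ≤ f k) {C r : ℝ}
    (hr₀ : 0 ≤ r) (hr₁ : r < 1)
    (hblock : ∀ j, ∑ k ∈ Finset.Ico (2 ^ j) (2 * 2 ^ j), f k ≤ C * r ^ j) :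
    Summable (fun k => f (k + 1)) ∧ ∑' k, f (k + 1) ≤ C / (1 - r) := by
  have hC : 0 ≤ C := by
    have h0 := hblock 0
    simp only [pow_zero, mul_one, Nat.Ico_succ_singleton, Finset.sum_singleton] at h0
    linarith [hf 1]
  have hpartial : ∀ n, ∑ k ∈ Finset.range n, f (k + 1) ≤ C / (1 - r) := fun n => by
    calc ∑ k ∈ Finset.range n, f (k + 1) = ∑ k ∈ Finset.Ico 1 (n + 1), f k := by
          rw [Finset.sum_Ico_eq_sum_range]; simp [add_comm]
      _ ≤ ∑ k ∈ Finset.Ico 1 (2 ^ n), f k :=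
          Finset.sum_le_sum_of_subset_of_nonneg (Finset.Ico_subset_Ico_right n.lt_two_pow_self)
            fun k _ _ => hf k
      _ ≤ ∑ j ∈ Finset.range n, C * r ^ j := by
          rw [sum_Ico_one_two_pow]; exact Finset.sum_le_sum fun j _ => hblock j
      _ ≤ C / (1 - r) := by
          rw [← Finset.mul_sum, ← mul_one_div, Finset.range_eq_Ico]
          gcongr
          simpa using geom_sum_Ico_le_of_lt_one (m := 0) (n := n) hr₀ hr₁
  exact ⟨summable_of_sum_range_le (fun k => hf _) hpartial,
    tsum_le_of_sum_range_le (fun k => hf _) hpartial⟩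

/-- Lemma 1: if `g` is Hölder of exponent `a > 1/2` on `[0,1]` with
`g(0) = g(1) = 0`, then for every `σ ∈ [0, a - 1/2)` there is a constant `C > 0`,
independent of `g`, with `∑_{k≥1} k^σ |g_k| ≤ C ‖g‖`, where
`g_k = 2∫_0^1 g(x) sin(πkx) dx`. -/
theorem holder_sine_coeff_bound (a : ℝ) (ha : 1 / 2 < a)
    (σ : ℝ) (hσ0 : 0 ≤ σ) (hσ : σ < a - 1 / 2) :
    ∃ C > 0, ∀ (g : ℝ → ℝ) (H : ℝ),
      (∀ x₁ ∈ Set.Icc (0:ℝ) 1, ∀ x₂ ∈ Set.Icc (0:ℝ) 1,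
        |g x₁ - g x₂| ≤ H * |x₁ - x₂| ^ a) →
      g 0 = 0 → g 1 = 0 →
      Summable (fun k : ℕ =>
        ((k + 1 : ℝ) ^ σ) * |2 * ∫ x in (0:ℝ)..1, g x * Real.sin (π * (k + 1) * x)|) ∧
      (∑' k : ℕ,
        ((k + 1 : ℝ) ^ σ) * |2 * ∫ x in (0:ℝ)..1, g x * Real.sin (π * (k + 1) * x)|)
        ≤ C * H := by
  set r : ℝ := 2 ^ (σ + 1 / 2 - a)
  have hr₁ : r < 1 := rpow_lt_one_of_one_lt_of_neg one_lt_two (by linarith)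
  refine ⟨2 ^ (σ + 1 - a) / (1 - r), div_pos (by positivity) (by linarith),
    fun g H hH hg0 hg1 => ?_⟩
  have hblock : ∀ j : ℕ,
      ∑ k ∈ Finset.Ico (2 ^ j : ℕ) (2 * 2 ^ j), (k : ℝ) ^ σ * |sineCoeff g k|
        ≤ 2 ^ (σ + 1 - a) * H * r ^ j := fun j => by
    have := sum_Ico_rpow_mul_abs_sineCoeff_le hH (by linarith) hg0 hg1 hσ0 (N := 2 ^ j)
      (by positivity)
    rwa [Nat.cast_pow, Nat.cast_ofNat, ← rpow_pow_comm zero_le_two] at this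
  obtain ⟨hsum, hle⟩ := summable_and_tsum_le_of_sum_Ico_two_pow_le (fun k => by positivity)
    (by positivity) hr₁ hblock
  simp only [sineCoeff, Nat.cast_add_one] at hsum hle
  exact ⟨hsum, hle.trans_eq (by ring)⟩
end
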